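/- Let ρ and σ be positive definite 2×2 density matrices, let λ_ρ be the largest eigenvalue of ρ and α_σ the smallest eigenvalue of σ, and assume α_σ < λ_ρ. Then the Umegaki relative entropy satisfies S(ρ‖σ) ≤ ‖ρ−σ‖₁ · λ_ρ · (log λ_ρ − log α_σ)/(λ_ρ − α_σ) ≤ ‖ρ−σ‖₁ · λ_ρ / α_σ. -/

import Mathlib

open Matrix ComplexOrder

/-- The trace norm of a complex matrix: the sum of its singular values,
realized as `Tr √(Aᴴ A)`. -/
noncomputable def traceNorm {d : ℕ} (A : Matrix (Fin d) (Fin d) ℂ) : ℝ :=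
  (((Matrix.posSemidef_conjTranspose_mul_self A).1.eigenvectorUnitary : Matrix (Fin d) (Fin d) ℂ) *
      Matrix.diagonal (((↑) : ℝ → ℂ) ∘ (Real.sqrt ·) ∘ (Matrix.posSemidef_conjTranspose_mul_self A).1.eigenvalues) *
      (star (Matrix.posSemidef_conjTranspose_mul_self A).1.eigenvectorUnitary :
        Matrix (Fin d) (Fin d) ℂ)).trace.re

/-- Functional calculus for a Hermitian matrix: apply `f` to the eigenvalues in an
orthonormal eigenbasis. -/
noncomputable def matFun {d : ℕ} {A : Matrix (Fin d) (Fin d) ℂ} (hA : A.IsHermitian)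
    (f : ℝ → ℝ) : Matrix (Fin d) (Fin d) ℂ :=
  (hA.eigenvectorUnitary : Matrix (Fin d) (Fin d) ℂ) *
    Matrix.diagonal (fun i => (f (hA.eigenvalues i) : ℂ)) *
    (star hA.eigenvectorUnitary : Matrix (Fin d) (Fin d) ℂ)

/-- `f : (0,∞) → ℝ` is operator monotone decreasing: for all positive definite matrices
`A ≤ B` (Loewner order) of any size, `f(B) ≤ f(A)`. -/
def OpMonoDecrOn (f : ℝ → ℝ) : Prop :=
  ∀ (n : ℕ) (A B : Matrix (Fin n) (Fin n) ℂ) (hA : A.PosDef) (hB : B.PosDef),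
    (B - A).PosSemidef → (matFun hA.1 f - matFun hB.1 f).PosSemidef

/-- The quasi-relative entropy `S_f(ρ‖σ) = Σ_{j,k} λ_j f(μ_k/λ_j) |⟨φ_k|ψ_j⟩|²` computed from
spectral decompositions `ρ = Σ_j λ_j |ψ_j⟩⟨ψ_j|`, `σ = Σ_k μ_k |φ_k⟩⟨φ_k|`. -/
noncomputable def quasiRelEntropy {d : ℕ} (f : ℝ → ℝ) {ρ σ : Matrix (Fin d) (Fin d) ℂ}
    (hρ : ρ.IsHermitian) (hσ : σ.IsHermitian) : ℝ :=
  ∑ j, ∑ k, hρ.eigenvalues j * f (hσ.eigenvalues k / hρ.eigenvalues j) *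
    ‖(inner ℂ (hσ.eigenvectorBasis k) (hρ.eigenvectorBasis j) : ℂ)‖ ^ 2

/-- The Umegaki relative entropy `S(ρ‖σ) = Tr(ρ (log ρ − log σ))`. -/
noncomputable def relEntropy {d : ℕ} {ρ σ : Matrix (Fin d) (Fin d) ℂ}
    (hρ : ρ.IsHermitian) (hσ : σ.IsHermitian) : ℝ :=
  ((ρ * (matFun hρ Real.log - matFun hσ Real.log)).trace).re

/-- The Tsallis relative q-entropy `S_q(ρ‖σ) = (1/(1−q))(1 − Tr(ρ^q σ^{1−q}))`. -/
noncomputable def tsallisEntropy {d : ℕ} (q : ℝ) {ρ σ : Matrix (Fin d) (Fin d) ℂ}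
    (hρ : ρ.IsHermitian) (hσ : σ.IsHermitian) : ℝ :=
  (1 / (1 - q)) *
    (1 - ((matFun hρ (fun x => x ^ q) * matFun hσ (fun x => x ^ (1 - q))).trace).re)

/-!
Write `ρ = ∑ λ_j |ψ_j⟩⟨ψ_j|` and `σ = ∑ μ_k |φ_k⟩⟨φ_k|`. The weights `P_jk = |⟨φ_k, ψ_j⟩|²` form a
doubly stochastic matrix and `S(ρ‖σ) = ∑ P_jk λ_j (log λ_j - log μ_k)`. Two instances of
`log t ≤ t - 1` bound each term by `λ_ρ K |λ_j - μ_k|`, where `K = (log λ_ρ - log α_σ)/(λ_ρ - α_σ)`,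
and a third gives `K ≤ 1/α_σ`. For qubits `ρ - σ` is traceless, so its eigenvalues are `±t` and
`‖ρ - σ‖₁² = 2 Tr (ρ - σ)² = 2 ∑ P_jk (λ_j - μ_k)²`; Cauchy–Schwarz against the weights, whose total
mass is `2`, then gives `∑ P_jk |λ_j - μ_k| ≤ ‖ρ - σ‖₁`.
-/

namespace Matrix

variable {n 𝕜 : Type*} [Fintype n] [DecidableEq n] [RCLike 𝕜] {U : Matrix n n 𝕜}

lemma sum_norm_sq_col_of_mem_unitaryGroup (hU : U ∈ unitaryGroup n 𝕜) (j : n) :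
    ∑ i, ‖U i j‖ ^ 2 = 1 := by
  have h := congrFun (congrFun (mem_unitaryGroup_iff'.1 hU) j) j
  simp only [mul_apply, star_apply, RCLike.star_def, RCLike.conj_mul, one_apply_eq] at h
  exact_mod_cast h

lemma sum_norm_sq_row_of_mem_unitaryGroup (hU : U ∈ unitaryGroup n 𝕜) (i : n) :
    ∑ j, ‖U i j‖ ^ 2 = 1 := by
  have h := congrFun (congrFun (mem_unitaryGroup_iff.1 hU) i) i
  simp only [mul_apply, star_apply, RCLike.star_def, RCLike.mul_conj, one_apply_eq] at h
  exact_mod_cast h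

end Matrix

section FunctionalCalculus

variable {d : ℕ} {A : Matrix (Fin d) (Fin d) ℂ} (hA : A.IsHermitian)

lemma matFun_id : matFun hA id = A :=
  hA.spectral_theorem.symm

lemma matFun_mul_matFun (f g : ℝ → ℝ) :
    matFun hA f * matFun hA g = matFun hA (fun x => f x * g x) := by
  have hU : (star hA.eigenvectorUnitary : Matrix (Fin d) (Fin d) ℂ) * hA.eigenvectorUnitary = 1 :=
    Matrix.UnitaryGroup.star_mul_self _
  simp only [matFun, mul_assoc]
  rw [← mul_assoc (star _ : Matrix (Fin d) (Fin d) ℂ), hU, one_mul, ← mul_assoc (diagonal _),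
    diagonal_mul_diagonal]
  push_cast
  rfl

lemma trace_matFun (f : ℝ → ℝ) : (matFun hA f).trace = ∑ i, (f (hA.eigenvalues i) : ℂ) := by
  rw [matFun, trace_mul_cycle, Matrix.UnitaryGroup.star_mul_self, one_mul, trace_diagonal]

lemma re_trace_matFun (f : ℝ → ℝ) : (matFun hA f).trace.re = ∑ i, f (hA.eigenvalues i) := by
  simp [trace_matFun]

lemma re_trace_mul_self : (A * A).trace.re = ∑ i, hA.eigenvalues i ^ 2 := by
  conv_lhs => rw [← matFun_id hA]
  rw [matFun_mul_matFun, re_trace_matFun]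
  simp [sq]

end FunctionalCalculus

lemma traceNorm_eq_re_trace_matFun_sqrt {d : ℕ} (A : Matrix (Fin d) (Fin d) ℂ) :
    traceNorm A = (matFun (posSemidef_conjTranspose_mul_self A).1 Real.sqrt).trace.re :=
  rfl

lemma traceNorm_nonneg {d : ℕ} (A : Matrix (Fin d) (Fin d) ℂ) : 0 ≤ traceNorm A := by
  rw [traceNorm_eq_re_trace_matFun_sqrt, re_trace_matFun]
  positivity

lemma traceNorm_eq_sum_abs_eigenvalues {d : ℕ} {A : Matrix (Fin d) (Fin d) ℂ}
    (hA : A.IsHermitian) : traceNorm A = ∑ i, |hA.eigenvalues i| := by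
  have hAA := (posSemidef_conjTranspose_mul_self A).1
  have hsqrt : cfc Real.sqrt (Aᴴ * A) = cfc (fun x : ℝ => |x|) A := by
    have hsq : A * A = cfc (fun x : ℝ => x * x) A := by
      rw [cfc_mul (fun x : ℝ => x) (fun x : ℝ => x) A, cfc_id' ℝ A]
    rw [hA.eq, hsq, ← cfc_comp' Real.sqrt (fun x : ℝ => x * x) A]
    simp only [Real.sqrt_mul_self_eq_abs]
  have h : traceNorm A = (cfc Real.sqrt (Aᴴ * A)).trace.re := by
    rw [traceNorm_eq_re_trace_matFun_sqrt, hAA.cfc_eq, IsHermitian.cfc]; rfl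
  have h2 : cfc (fun x : ℝ => |x|) A = matFun hA (fun x => |x|) := by
    rw [hA.cfc_eq, IsHermitian.cfc]; rfl
  rw [h, hsqrt, h2, re_trace_matFun]

section Overlap

variable {d : ℕ} {A B : Matrix (Fin d) (Fin d) ℂ} (hA : A.IsHermitian) (hB : B.IsHermitian)

/-- `|⟨φ_k, ψ_j⟩|²` for the eigenbases `ψ` of `A` and `φ` of `B`. -/
noncomputable def eigenOverlap (j k : Fin d) : ℝ :=
  ‖(star (hB.eigenvectorUnitary : Matrix (Fin d) (Fin d) ℂ) * hA.eigenvectorUnitary) k j‖ ^ 2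

lemma star_eigenvectorUnitary_mul_mem_unitaryGroup :
    star (hB.eigenvectorUnitary : Matrix (Fin d) (Fin d) ℂ) * hA.eigenvectorUnitary ∈
      unitaryGroup (Fin d) ℂ :=
  (star hB.eigenvectorUnitary * hA.eigenvectorUnitary).2

lemma eigenOverlap_nonneg (j k : Fin d) : 0 ≤ eigenOverlap hA hB j k :=
  sq_nonneg _

lemma sum_eigenOverlap_right (j : Fin d) : ∑ k, eigenOverlap hA hB j k = 1 :=
  sum_norm_sq_col_of_mem_unitaryGroup (star_eigenvectorUnitary_mul_mem_unitaryGroup hA hB) j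

lemma sum_eigenOverlap_left (k : Fin d) : ∑ j, eigenOverlap hA hB j k = 1 :=
  sum_norm_sq_row_of_mem_unitaryGroup (star_eigenvectorUnitary_mul_mem_unitaryGroup hA hB) k

lemma re_trace_matFun_mul_matFun (f g : ℝ → ℝ) :
    (matFun hA f * matFun hB g).trace.re =
      ∑ j, ∑ k, f (hA.eigenvalues j) * g (hB.eigenvalues k) * eigenOverlap hA hB j k := by
  set W := star (hB.eigenvectorUnitary : Matrix (Fin d) (Fin d) ℂ) * hA.eigenvectorUnitary
  have hcycle : (matFun hA f * matFun hB g).trace =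
      (diagonal (fun j => (f (hA.eigenvalues j) : ℂ)) * star W *
        diagonal (fun k => (g (hB.eigenvalues k) : ℂ)) * W).trace := by
    simp only [matFun, W, star_mul, star_star, mul_assoc]
    rw [trace_mul_comm (hA.eigenvectorUnitary : Matrix (Fin d) (Fin d) ℂ)]
    simp only [mul_assoc]
  rw [hcycle, trace]
  simp only [diag, mul_apply (M := _ * star W * _), mul_diagonal, diagonal_mul, star_apply,
    Complex.re_sum]
  refine Finset.sum_congr rfl fun j _ => Finset.sum_congr rfl fun k _ => ?_
  have h : (f (hA.eigenvalues j) : ℂ) * star (W k j) * g (hB.eigenvalues k) * W k j =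
      ((f (hA.eigenvalues j) * g (hB.eigenvalues k) * ‖W k j‖ ^ 2 : ℝ) : ℂ) := by
    push_cast
    rw [← Complex.conj_mul', Complex.star_def]
    ring
  rw [h, Complex.ofReal_re, eigenOverlap]

lemma sum_sum_mul_eigenOverlap_left (u : Fin d → ℝ) :
    ∑ j, ∑ k, u j * eigenOverlap hA hB j k = ∑ j, u j := by
  simp only [← Finset.mul_sum, sum_eigenOverlap_right, mul_one]

lemma sum_sum_mul_eigenOverlap_right (v : Fin d → ℝ) :
    ∑ j, ∑ k, v k * eigenOverlap hA hB j k = ∑ k, v k := by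
  rw [Finset.sum_comm]
  simp only [← Finset.mul_sum, sum_eigenOverlap_left, mul_one]

lemma relEntropy_eq_sum_eigenOverlap :
    relEntropy hA hB = ∑ j, ∑ k, hA.eigenvalues j *
      (Real.log (hA.eigenvalues j) - Real.log (hB.eigenvalues k)) * eigenOverlap hA hB j k := by
  have hAA : (A * matFun hA Real.log).trace.re =
      ∑ j, ∑ k, hA.eigenvalues j * Real.log (hA.eigenvalues j) * eigenOverlap hA hB j k := by
    rw [show A * matFun hA Real.log = matFun hA id * matFun hA Real.log by rw [matFun_id],
      matFun_mul_matFun, re_trace_matFun, sum_sum_mul_eigenOverlap_left]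
    rfl
  have hAB : (A * matFun hB Real.log).trace.re =
      ∑ j, ∑ k, hA.eigenvalues j * Real.log (hB.eigenvalues k) * eigenOverlap hA hB j k := by
    rw [show A * matFun hB Real.log = matFun hA id * matFun hB Real.log by rw [matFun_id],
      re_trace_matFun_mul_matFun]
    rfl
  rw [relEntropy, mul_sub, trace_sub, Complex.sub_re, hAA, hAB, ← Finset.sum_sub_distrib]
  refine Finset.sum_congr rfl fun j _ => ?_
  rw [← Finset.sum_sub_distrib]
  exact Finset.sum_congr rfl fun k _ => by ring

lemma re_trace_sub_mul_sub :
    ((A - B) * (A - B)).trace.re =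
      ∑ j, ∑ k, (hA.eigenvalues j - hB.eigenvalues k) ^ 2 * eigenOverlap hA hB j k := by
  have hAB : (A * B).trace.re =
      ∑ j, ∑ k, hA.eigenvalues j * hB.eigenvalues k * eigenOverlap hA hB j k := by
    rw [show A * B = matFun hA id * matFun hB id by rw [matFun_id, matFun_id],
      re_trace_matFun_mul_matFun]
    rfl
  calc ((A - B) * (A - B)).trace.re
        = (A * A).trace.re - 2 * (A * B).trace.re + (B * B).trace.re := by
        rw [sub_mul, mul_sub, mul_sub, trace_sub, trace_sub, trace_sub, trace_mul_comm B A]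
        simp only [Complex.sub_re]
        ring
    _ = ∑ j, ∑ k, (hA.eigenvalues j ^ 2 - 2 * hA.eigenvalues j * hB.eigenvalues k +
          hB.eigenvalues k ^ 2) * eigenOverlap hA hB j k := by
        rw [re_trace_mul_self hA, re_trace_mul_self hB, hAB,
          ← sum_sum_mul_eigenOverlap_left hA hB (fun j => hA.eigenvalues j ^ 2),
          ← sum_sum_mul_eigenOverlap_right hA hB (fun k => hB.eigenvalues k ^ 2)]
        simp only [Finset.mul_sum, ← Finset.sum_sub_distrib, ← Finset.sum_add_distrib]
        exact Finset.sum_congr rfl fun j _ => Finset.sum_congr rfl fun k _ => by ring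
    _ = _ := by simp only [sub_sq]

end Overlap

lemma traceNorm_sq_eq_two_mul_re_trace_mul_self {X : Matrix (Fin 2) (Fin 2) ℂ}
    (hX : X.IsHermitian) (htr : X.trace = 0) : traceNorm X ^ 2 = 2 * (X * X).trace.re := by
  have h : hX.eigenvalues 1 = -hX.eigenvalues 0 := by
    have h0 := congrArg Complex.re hX.trace_eq_sum_eigenvalues
    simp only [htr, Complex.zero_re, Complex.coe_algebraMap, Fin.sum_univ_two, Complex.add_re,
      Complex.ofReal_re] at h0
    linarith
  rw [traceNorm_eq_sum_abs_eigenvalues hX, re_trace_mul_self hX, Fin.sum_univ_two,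
    Fin.sum_univ_two, h, abs_neg]
  linear_combination 4 * sq_abs (hX.eigenvalues 0)

lemma sum_sum_abs_sub_mul_eigenOverlap_le_traceNorm {A B : Matrix (Fin 2) (Fin 2) ℂ}
    (hA : A.IsHermitian) (hB : B.IsHermitian) (htr : A.trace = B.trace) :
    ∑ j, ∑ k, |hA.eigenvalues j - hB.eigenvalues k| * eigenOverlap hA hB j k ≤
      traceNorm (A - B) := by
  set P := eigenOverlap hA hB
  set x : Fin 2 → Fin 2 → ℝ := fun j k => hA.eigenvalues j - hB.eigenvalues k
  have hCS : (∑ j, ∑ k, |x j k| * P j k) ^ 2 ≤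
      (∑ j, ∑ k, P j k) * ∑ j, ∑ k, x j k ^ 2 * P j k := by
    simp only [← Finset.sum_product']
    refine Finset.sum_sq_le_sum_mul_sum_of_sq_le_mul _ (fun _ _ => eigenOverlap_nonneg ..)
      (fun _ _ => mul_nonneg (sq_nonneg _) (eigenOverlap_nonneg ..)) fun _ _ => le_of_eq ?_
    rw [mul_pow, sq_abs]
    ring
  have hP : ∑ j, ∑ k, P j k = 2 := by
    simp only [P, sum_eigenOverlap_right, Finset.sum_const, Finset.card_univ, Fintype.card_fin]
    norm_num
  rw [hP, ← re_trace_sub_mul_sub, ← traceNorm_sq_eq_two_mul_re_trace_mul_self (hA.sub hB)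
    (by rw [trace_sub, htr, sub_self])] at hCS
  have hnonneg : 0 ≤ ∑ j, ∑ k, |x j k| * P j k :=
    Finset.sum_nonneg fun j _ => Finset.sum_nonneg fun k _ =>
      mul_nonneg (abs_nonneg _) (eigenOverlap_nonneg ..)
  exact (pow_le_pow_iff_left₀ hnonneg (traceNorm_nonneg _) two_ne_zero).1 hCS

open Real

lemma mul_log_sub_log_le_sub {u v : ℝ} (hu : 0 < u) (hv : 0 < v) :
    v * (log u - log v) ≤ u - v := by
  have h := log_le_sub_one_of_pos (div_pos hu hv)
  rw [log_div hu.ne' hv.ne'] at h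
  calc v * (log u - log v) ≤ v * (u / v - 1) := mul_le_mul_of_nonneg_left h hv.le
    _ = u - v := by field_simp

lemma log_sub_log_div_sub_le_inv {a l : ℝ} (ha : 0 < a) (hal : a < l) :
    (log l - log a) / (l - a) ≤ a⁻¹ := by
  rw [div_le_iff₀ (sub_pos.2 hal), ← div_eq_inv_mul, le_div_iff₀ ha, mul_comm]
  exact mul_log_sub_log_le_sub (ha.trans hal) ha

lemma mul_log_sub_log_mul_sub_le {a l x y : ℝ} (ha : 0 < a) (hxl : x ≤ l) (hay : a ≤ y)
    (hyx : y < x) : x * (log x - log y) * (l - a) ≤ l * (log l - log a) * (x - y) := by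
  have hy : 0 < y := ha.trans_le hay
  have hx : 0 < x := hy.trans hyx
  have hl : 0 < l := hx.trans_le hxl
  have h₁ := mul_log_sub_log_le_sub hx hy
  have h₂ := mul_log_sub_log_le_sub (mul_pos ha hx) (mul_pos hl hy)
  rw [log_mul ha.ne' hx.ne', log_mul hl.ne' hy.ne'] at h₂
  have hlyax : 0 ≤ l * y - a * x := by nlinarith
  -- `y` times the claim is the sum of `h₁ * (l y - a x)` and `h₂ * (x - y)`.
  refine le_of_mul_le_mul_left ?_ hy
  nlinarith [mul_le_mul_of_nonneg_left h₁ hlyax,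
    mul_le_mul_of_nonneg_left h₂ (sub_nonneg.2 hyx.le)]

lemma mul_log_sub_log_le {a l x y : ℝ} (ha : 0 < a) (hal : a < l) (hx : 0 < x) (hxl : x ≤ l)
    (hay : a ≤ y) : x * (log x - log y) ≤ l * ((log l - log a) / (l - a)) * |x - y| := by
  have hK : 0 ≤ (log l - log a) / (l - a) :=
    div_nonneg (sub_nonneg.2 (log_le_log ha hal.le)) (sub_nonneg.2 hal.le)
  rcases le_or_gt x y with hxy | hyx
  · have : x * (log x - log y) ≤ 0 :=
      mul_nonpos_of_nonneg_of_nonpos hx.le (sub_nonpos.2 (log_le_log hx hxy))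
    exact this.trans (mul_nonneg (mul_nonneg (ha.trans hal).le hK) (abs_nonneg _))
  · rw [abs_of_pos (sub_pos.2 hyx), mul_div_assoc', div_mul_eq_mul_div,
      le_div_iff₀ (sub_pos.2 hal)]
    exact mul_log_sub_log_mul_sub_le ha hxl hay hyx

/-- upper continuity bound on the Umegaki relative entropy for qubits. -/
theorem relEntropy_le_of_qubits
    (ρ σ : Matrix (Fin 2) (Fin 2) ℂ) (hρ : ρ.PosDef) (hσ : σ.PosDef)
    (hρtr : ρ.trace = 1) (hσtr : σ.trace = 1)
    (lρ aσ : ℝ)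
    (hl : IsGreatest (Set.range hρ.1.eigenvalues) lρ)
    (haσ : IsLeast (Set.range hσ.1.eigenvalues) aσ)
    (hlt : aσ < lρ) :
    relEntropy hρ.1 hσ.1 ≤
        traceNorm (ρ - σ) * lρ * ((Real.log lρ - Real.log aσ) / (lρ - aσ)) ∧
      traceNorm (ρ - σ) * lρ * ((Real.log lρ - Real.log aσ) / (lρ - aσ)) ≤
        traceNorm (ρ - σ) * lρ / aσ := by
  have ha : 0 < aσ := by
    obtain ⟨k, hk⟩ := haσ.1
    exact hk ▸ hσ.eigenvalues_pos k
  set K := (log lρ - log aσ) / (lρ - aσ)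
  have hK : 0 ≤ K := div_nonneg (sub_nonneg.2 (log_le_log ha hlt.le)) (sub_nonneg.2 hlt.le)
  constructor
  · calc relEntropy hρ.1 hσ.1
        = ∑ j, ∑ k, hρ.1.eigenvalues j * (log (hρ.1.eigenvalues j) - log (hσ.1.eigenvalues k)) *
            eigenOverlap hρ.1 hσ.1 j k := relEntropy_eq_sum_eigenOverlap hρ.1 hσ.1
      _ ≤ ∑ j, ∑ k, lρ * K * |hρ.1.eigenvalues j - hσ.1.eigenvalues k| *
            eigenOverlap hρ.1 hσ.1 j k := by
        refine Finset.sum_le_sum fun j _ => Finset.sum_le_sum fun k _ =>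
          mul_le_mul_of_nonneg_right ?_ (eigenOverlap_nonneg ..)
        exact mul_log_sub_log_le ha hlt (hρ.eigenvalues_pos j) (hl.2 ⟨j, rfl⟩) (haσ.2 ⟨k, rfl⟩)
      _ = lρ * K * ∑ j, ∑ k, |hρ.1.eigenvalues j - hσ.1.eigenvalues k| *
            eigenOverlap hρ.1 hσ.1 j k := by
        simp only [Finset.mul_sum, mul_assoc]
      _ ≤ lρ * K * traceNorm (ρ - σ) := by
        exact mul_le_mul_of_nonneg_left
          (sum_sum_abs_sub_mul_eigenOverlap_le_traceNorm hρ.1 hσ.1 (hρtr.trans hσtr.symm))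
          (mul_nonneg (ha.trans hlt).le hK)
      _ = traceNorm (ρ - σ) * lρ * K := by ring
  · rw [div_eq_mul_inv _ aσ]
    exact mul_le_mul_of_nonneg_left (log_sub_log_div_sub_le_inv ha hlt)
      (mul_nonneg (traceNorm_nonneg _) (ha.trans hlt).le)
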